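/- Assume (A,B) is reachable. Then the convolutional code C(A,B,C,D) is non-catastrophic (admits a right prime generator matrix, equivalently a polynomial parity-check matrix) if and only if the pair (A,C) is observable, i.e., rank[C; CA; ...; CA^{s-1}] = s. -/

import Mathlib

/-!
If `G` has a polynomial left inverse, the code it generates is saturated in `F[X]^n`: whenever
`r • w` is a codeword with `r ≠ 0`, so is `w`. Conversely a saturated submodule of `F[X]^n` has a
torsion-free, hence free, quotient; it is then a direct summand, and a basis of it is a right prime
generator matrix. So everything reduces to: under reachability, the code `𝒞(A,B,C,D)` is saturated
iff `(A,C)` is observable.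

Reducing modulo `r`, a state `x` with `r ∣ (X - A) x` and `r ∣ C x` becomes a vector of
`F[X]/(r)` which `A` multiplies by `X` and `C` kills; observability forces it to vanish, i.e.
`r ∣ x`, which gives saturation. Conversely, for an unobservable `c ≠ 0`, Cayley–Hamilton gives a
state `x₀` with `(X - A) x₀ = χ_A • c` and `C x₀ = 0`, while reachability gives `x₁`, `u` with
`(X - A) x₁ = B u - c`. Then `χ_A • w` is a codeword, with state `x₀ + χ_A • x₁`, for
`w = (C x₁ + D u, u)`. If `w` were a codeword with state `x`, then `(X - A)(x - x₁) = c`, which is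
impossible for a nonzero constant vector `c` by comparing degrees.
-/

open Polynomial Matrix

namespace Submodule

variable {R M : Type*} [CommRing R] [AddCommGroup M] [Module R M]

theorem isTorsionFree_quotient_iff [IsDomain R] (N : Submodule R M) :
    Module.IsTorsionFree R (M ⧸ N) ↔ ∀ r : R, r ≠ 0 → ∀ w : M, r • w ∈ N → w ∈ N := by
  simp_rw [Module.isTorsionFree_iff_smul_eq_zero, N.mkQ_surjective.forall, ← map_smul,
    ← LinearMap.mem_ker, ker_mkQ, or_iff_not_imp_left]
  exact ⟨fun h r hr w hw => h r w hw hr, fun h r w hw hr => h r hr w hw⟩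

theorem exists_comp_subtype_eq_id (N : Submodule R M) [Module.Projective R (M ⧸ N)] :
    ∃ p : M →ₗ[R] N, p ∘ₗ N.subtype = LinearMap.id := by
  obtain ⟨s, hs⟩ := N.mkQ.exists_rightInverse_of_surjective N.range_mkQ
  have hmem (x : M) : x - s (N.mkQ x) ∈ N := by
    rw [← Quotient.mk_eq_zero, ← mkQ_apply, map_sub, ← LinearMap.comp_apply N.mkQ s, hs,
      LinearMap.id_apply, sub_self]
  refine ⟨(LinearMap.id - s ∘ₗ N.mkQ).codRestrict N hmem, LinearMap.ext fun x => ?_⟩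
  ext
  simp [(Quotient.mk_eq_zero N).mpr x.2]

theorem exists_range_mulVecLin_eq_and_mul_eq_one [IsDomain R] [IsPrincipalIdealRing R]
    {m k : Type*} [Fintype m] [Fintype k] [DecidableEq k] (N : Submodule R (m → R))
    [Module.IsTorsionFree R ((m → R) ⧸ N)] (hN : Module.finrank R N = Fintype.card k) :
    ∃ (G : Matrix m k R) (L : Matrix k m R), LinearMap.range G.mulVecLin = N ∧ L * G = 1 := by
  classical
  obtain ⟨p, hp⟩ := N.exists_comp_subtype_eq_id
  let e : (k → R) ≃ₗ[R] N :=
    ((Module.finBasisOfFinrankEq R N hN).reindex (Fintype.equivFin k).symm).equivFun.symm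
  refine ⟨LinearMap.toMatrix' (N.subtype ∘ₗ e.toLinearMap),
    LinearMap.toMatrix' (e.symm.toLinearMap ∘ₗ p), ?_, ?_⟩
  · rw [← Matrix.toLin'_apply', Matrix.toLin'_toMatrix', LinearMap.range_comp, e.range,
      Submodule.map_subtype_top]
  · rw [← LinearMap.toMatrix'_comp, LinearMap.comp_assoc, ← LinearMap.comp_assoc _ N.subtype, hp,
      LinearMap.id_comp, e.symm_comp, LinearMap.toMatrix'_id]

end Submodule

namespace Matrix

section LeftInverse

variable {R : Type*} [CommRing R] {m k : Type*} [Fintype m] [Fintype k] [DecidableEq k]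

theorem linearIndependent_transpose_of_mul_eq_one {G : Matrix m k R} {L : Matrix k m R}
    (h : L * G = 1) : LinearIndependent R Gᵀ :=
  mulVec_injective_iff.mp fun u v huv => by
    simpa [mulVec_mulVec, h] using congrArg (L *ᵥ ·) huv

theorem isTorsionFree_quotient_range_of_mul_eq_one [IsDomain R] {G : Matrix m k R}
    {L : Matrix k m R} (h : L * G = 1) :
    Module.IsTorsionFree R ((m → R) ⧸ LinearMap.range G.mulVecLin) := by
  rw [Submodule.isTorsionFree_quotient_iff]
  rintro r hr w ⟨u, hu⟩
  rw [mulVecLin_apply] at hu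
  have hLu : u = r • (L *ᵥ w) := by
    rw [← mulVec_smul, ← hu, mulVec_mulVec, h, one_mulVec]
  refine ⟨L *ᵥ w, smul_right_injective _ hr ?_⟩
  simp only [mulVecLin_apply, ← mulVec_smul, ← hLu, ← hu]

end LeftInverse

section Rank

variable {K : Type*} [Field K] {m n : Type*} [Fintype n]

theorem mulVec_injective_iff_rank_eq (M : Matrix m n K) :
    Function.Injective M.mulVec ↔ M.rank = Fintype.card n := by
  rw [mulVec_injective_iff, linearIndependent_iff_card_eq_finrank_span, rank_eq_finrank_span_cols,
    eq_comm]
  rfl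

theorem mulVec_surjective_of_rank_eq [Fintype m] {M : Matrix m n K} (h : M.rank = Fintype.card m) :
    Function.Surjective M.mulVec := by
  rw [← coe_mulVecLin, ← LinearMap.range_eq_top]
  exact Submodule.eq_top_of_finrank_eq (h.trans (Module.finrank_fintype_fun_eq_card K).symm)

theorem exists_mul_eq_one_of_mulVec_injective [Fintype m] [DecidableEq n] {M : Matrix m n K}
    (hM : Function.Injective M.mulVec) : ∃ L : Matrix n m K, L * M = 1 := by
  classical
  obtain ⟨g, hg⟩ := M.mulVecLin.exists_leftInverse_of_injective (LinearMap.ker_eq_bot.mpr hM)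
  refine ⟨LinearMap.toMatrix' g, ?_⟩
  rw [← LinearMap.toMatrix'_toLin' M, ← LinearMap.toMatrix'_comp, toLin'_apply', hg,
    LinearMap.toMatrix'_id]

end Rank

section Charmatrix

variable {R : Type*} [CommRing R] {σ : Type*} [Fintype σ]

theorem map_C_mulVec_C_comp {ι : Type*} (M : Matrix ι σ R) (v : σ → R) :
    M.map C *ᵥ (C ∘ v) = C ∘ (M *ᵥ v) :=
  funext fun i => (C.map_mulVec M v i).symm

variable [DecidableEq σ] (A : Matrix σ σ R)

theorem charmatrix_mulVec (x : σ → R[X]) :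
    charmatrix A *ᵥ x = (X : R[X]) • x - A.map C *ᵥ x := by
  rw [charmatrix, sub_mulVec, scalar_apply, ← smul_one_eq_diagonal, smul_mulVec, one_mulVec]
  rfl

/-- In a nonzero solution of `(X - A) x = c`, a coordinate of `x` of maximal degree `d` makes the
coefficient of `X ^ (d + 1)` on the left nonzero. -/
theorem charmatrix_mulVec_eq_C_comp_iff {x : σ → R[X]} {c : σ → R} :
    charmatrix A *ᵥ x = C ∘ c ↔ x = 0 ∧ c = 0 := by
  refine ⟨fun h => ?_, fun ⟨hx, hc⟩ => by simp [hx, hc]⟩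
  have hx : x = 0 := by
    by_contra hx
    obtain ⟨i, hi⟩ := Function.ne_iff.mp hx
    obtain ⟨i₀, -, hi₀⟩ := Finset.exists_max_image Finset.univ (fun j => (x j).degree)
      ⟨i, Finset.mem_univ i⟩
    have hxi₀ : x i₀ ≠ 0 := fun h0 => hi (by simpa [h0] using hi₀ i (Finset.mem_univ i))
    set d := (x i₀).natDegree
    have hcoeff (j : σ) : (x j).coeff (d + 1) = 0 :=
      coeff_eq_zero_of_degree_lt <| (hi₀ j (Finset.mem_univ j)).trans_lt <|
        degree_le_natDegree.trans_lt (WithBot.coe_lt_coe.mpr d.lt_succ_self)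
    rw [charmatrix_mulVec] at h
    have := congrArg (coeff · (d + 1)) (congrFun h i₀)
    simp [mulVec, dotProduct, finsetSum_coeff, coeff_X_mul, hcoeff] at this
    exact hxi₀ (leadingCoeff_eq_zero.mp this)
  refine ⟨hx, funext fun i => C_eq_zero.mp ?_⟩
  simpa [hx] using (congrFun h i).symm

/-- `krylovSum A c i = ∑ j < i, X ^ (i - 1 - j) • A ^ j c`. -/
noncomputable def krylovSum (c : σ → R) : ℕ → σ → R[X]
  | 0 => 0
  | i + 1 => (X : R[X]) • krylovSum c i + C ∘ (A ^ i *ᵥ c)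

theorem charmatrix_mulVec_krylovSum (c : σ → R) (i : ℕ) :
    charmatrix A *ᵥ A.krylovSum c i = (X : R[X]) ^ i • (C ∘ c) - C ∘ (A ^ i *ᵥ c) := by
  induction i with
  | zero => simp [krylovSum]
  | succ i ih =>
    rw [krylovSum, mulVec_add, mulVec_smul, ih, charmatrix_mulVec, map_C_mulVec_C_comp,
      mulVec_mulVec, ← pow_succ', smul_sub, smul_smul, ← pow_succ']
    abel

theorem map_C_mulVec_krylovSum_eq_zero {ι : Type*} (M : Matrix ι σ R) (c : σ → R) (i : ℕ)
    (h : ∀ j < i, M *ᵥ (A ^ j *ᵥ c) = 0) : M.map C *ᵥ A.krylovSum c i = 0 := by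
  induction i with
  | zero => simp [krylovSum]
  | succ i ih =>
    rw [krylovSum, mulVec_add, mulVec_smul, ih fun j hj => h j (by omega),
      map_C_mulVec_C_comp, h i i.lt_succ_self]
    simp

theorem exists_charmatrix_mulVec_eq_charpoly_smul [Nontrivial R] {ι : Type*} (Cm : Matrix ι σ R)
    (c : σ → R) (hc : ∀ j < Fintype.card σ, Cm *ᵥ (A ^ j *ᵥ c) = 0) :
    ∃ x, charmatrix A *ᵥ x = A.charpoly • (C ∘ c) ∧ Cm.map C *ᵥ x = 0 := by
  set q := A.charpoly
  refine ⟨∑ i ∈ Finset.range (q.natDegree + 1), C (q.coeff i) • A.krylovSum c i, ?_,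
    (mulVec_sum _ _ _).trans (Finset.sum_eq_zero fun i hi => ?_)⟩
  · have hCH : ∑ i ∈ Finset.range (q.natDegree + 1), q.coeff i • A ^ i = 0 := by
      rw [← aeval_eq_sum_range, aeval_self_charpoly]
    have hconst :
        ∑ i ∈ Finset.range (q.natDegree + 1), C (q.coeff i) • C ∘ (A ^ i *ᵥ c) = 0 := by
      funext k
      simp only [Finset.sum_apply, Pi.smul_apply, Function.comp_apply, smul_eq_mul, ← C_mul,
        ← map_sum, Pi.zero_apply]
      rw [C_eq_zero]
      simpa [sum_mulVec, smul_mulVec, Finset.sum_apply] using congrFun (congrArg (· *ᵥ c) hCH) k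
    simp_rw [mulVec_sum, mulVec_smul, charmatrix_mulVec_krylovSum, smul_sub, smul_smul,
      Finset.sum_sub_distrib, ← Finset.sum_smul, ← as_sum_range_C_mul_X_pow, hconst, sub_zero]
  · rw [mulVec_smul, map_C_mulVec_krylovSum_eq_zero A Cm c i fun j hj => hc j ?_, smul_zero]
    rw [Finset.mem_range, charpoly_natDegree_eq_dim] at hi
    omega

end Charmatrix

section Observability

variable {R : Type*} [CommRing R] {σ ι κ : Type*} [Fintype σ] [DecidableEq σ]

def observabilityMatrix (A : Matrix σ σ R) (Cm : Matrix ι σ R) (N : ℕ) :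
    Matrix (Fin N × ι) σ R :=
  of fun p j => (Cm * A ^ (p.1 : ℕ)) p.2 j

def reachabilityMatrix (A : Matrix σ σ R) (B : Matrix σ κ R) (N : ℕ) :
    Matrix σ (Fin N × κ) R :=
  of fun i p => (A ^ (p.1 : ℕ) * B) i p.2

theorem exists_charmatrix_mulVec_eq_sub [Fintype κ] {A : Matrix σ σ R} {B : Matrix σ κ R} {N : ℕ}
    (hreach : Function.Surjective (A.reachabilityMatrix B N).mulVec) (c : σ → R) :
    ∃ x u, charmatrix A *ᵥ x = B.map C *ᵥ u - C ∘ c := by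
  obtain ⟨v, rfl⟩ := hreach c
  let v' (t : Fin N) (j : κ) : R := v (t, j)
  refine ⟨∑ t : Fin N, A.krylovSum (B *ᵥ v' t) t, ∑ t : Fin N, (X : R[X]) ^ (t : ℕ) • C ∘ v' t, ?_⟩
  have hv : A.reachabilityMatrix B N *ᵥ v = ∑ t : Fin N, A ^ (t : ℕ) *ᵥ (B *ᵥ v' t) := by
    simp only [mulVec_mulVec]
    funext i
    simp [mulVec, dotProduct, reachabilityMatrix, Finset.sum_apply, Fintype.sum_prod_type, v']
  simp_rw [mulVec_sum, charmatrix_mulVec_krylovSum, mulVec_smul, map_C_mulVec_C_comp,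
    Finset.sum_sub_distrib, hv, sub_right_inj]
  funext i
  simp [Finset.sum_apply]

variable {F : Type*} [Field F] [Fintype ι] {A : Matrix σ σ F} {Cm : Matrix ι σ F} {N : ℕ}

theorem eq_zero_of_map_mulVec_eq_smul {S : Type*} [CommRing S] (f : F →+* S)
    (hobs : Function.Injective (A.observabilityMatrix Cm N).mulVec) {a : S} {x : σ → S}
    (hA : A.map f *ᵥ x = a • x) (hC : Cm.map f *ᵥ x = 0) : x = 0 := by
  obtain ⟨L, hL⟩ := exists_mul_eq_one_of_mulVec_injective hobs
  have hpow (j : ℕ) : (A ^ j).map f *ᵥ x = a ^ j • x := by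
    induction j with
    | zero => simp
    | succ j ih => rw [pow_succ', Matrix.map_mul, ← mulVec_mulVec, ih, mulVec_smul, hA, smul_smul,
        pow_succ]
  have hO : (A.observabilityMatrix Cm N).map f *ᵥ x = 0 := funext fun p => by
    change ((Cm * A ^ (p.1 : ℕ)).map f *ᵥ x) p.2 = 0
    rw [Matrix.map_mul, ← mulVec_mulVec, hpow, mulVec_smul, hC, smul_zero, Pi.zero_apply]
  calc x = (L * A.observabilityMatrix Cm N).map f *ᵥ x := by simp [hL]
    _ = 0 := by rw [Matrix.map_mul, ← mulVec_mulVec, hO, mulVec_zero]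

theorem dvd_of_dvd_charmatrix_mulVec
    (hobs : Function.Injective (A.observabilityMatrix Cm N).mulVec) {r : F[X]} {x : σ → F[X]}
    (hA : ∀ i, r ∣ (charmatrix A *ᵥ x) i) (hC : ∀ i, r ∣ (Cm.map C *ᵥ x) i) (i : σ) :
    r ∣ x i := by
  let π := Ideal.Quotient.mk (Ideal.span {r})
  have hπ {p : F[X]} : r ∣ p ↔ π p = 0 := by
    rw [Ideal.Quotient.eq_zero_iff_mem, Ideal.mem_span_singleton]
  refine hπ.mpr (congrFun (eq_zero_of_map_mulVec_eq_smul (π.comp C) hobs (a := π X)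
    (x := π ∘ x) (funext fun j => ?_) (funext fun j => ?_)) i)
  · have := hπ.mp (hA j)
    rw [charmatrix_mulVec, Pi.sub_apply, map_sub, sub_eq_zero, π.map_mulVec, Matrix.map_map] at this
    exact this.symm
  · have := hπ.mp (hC j)
    rwa [π.map_mulVec, Matrix.map_map] at this

end Observability

end Matrix

section ConvolutionalCode

variable {R : Type*} [CommRing R] {σ ι κ : Type*} [Fintype σ] [Fintype κ]

/-- `𝒞(A, B, C, D)`; a codeword `Sum.elim y u` pairs the output `y` with the input `u`. -/
def convCode (A : Matrix σ σ R) (B : Matrix σ κ R) (Cm : Matrix ι σ R) (Dm : Matrix ι κ R) :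
    Submodule R[X] (ι ⊕ κ → R[X]) where
  carrier := {v | ∃ x : σ → R[X],
    (X : R[X]) • x = A.map C *ᵥ x + B.map C *ᵥ (v ∘ Sum.inr) ∧
    v ∘ Sum.inl = Cm.map C *ᵥ x + Dm.map C *ᵥ (v ∘ Sum.inr)}
  add_mem' := by
    rintro v w ⟨x, hx, hxo⟩ ⟨y, hy, hyo⟩
    refine ⟨x + y, ?_, ?_⟩
    · rw [smul_add, hx, hy, Pi.add_comp, mulVec_add, mulVec_add]
      abel
    · rw [Pi.add_comp, Pi.add_comp, hxo, hyo, mulVec_add, mulVec_add]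
      abel
  zero_mem' := ⟨0, by simp [Pi.zero_comp], by simp [Pi.zero_comp]⟩
  smul_mem' := by
    rintro r v ⟨x, hx, hxo⟩
    refine ⟨r • x, ?_, ?_⟩
    · rw [smul_comm, hx, Pi.smul_comp, mulVec_smul, mulVec_smul, smul_add]
    · rw [Pi.smul_comp, Pi.smul_comp, hxo, mulVec_smul, mulVec_smul, smul_add]

variable [DecidableEq σ]

theorem mem_convCode {A : Matrix σ σ R} {B : Matrix σ κ R} {Cm : Matrix ι σ R}
    {Dm : Matrix ι κ R} {v : ι ⊕ κ → R[X]} :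
    v ∈ convCode A B Cm Dm ↔ ∃ x, charmatrix A *ᵥ x = B.map C *ᵥ (v ∘ Sum.inr) ∧
      v ∘ Sum.inl = Cm.map C *ᵥ x + Dm.map C *ᵥ (v ∘ Sum.inr) := by
  simp only [charmatrix_mulVec, sub_eq_iff_eq_add']
  rfl

variable {F : Type*} [Field F] {A : Matrix σ σ F} {B : Matrix σ κ F} {Cm : Matrix ι σ F}
  {Dm : Matrix ι κ F}

theorem eq_zero_of_mem_convCode {v : ι ⊕ κ → F[X]} (hv : v ∈ convCode A B Cm Dm)
    (hinr : v ∘ Sum.inr = 0) : v = 0 := by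
  obtain ⟨x, hx, hxo⟩ := mem_convCode.mp hv
  rw [hinr, mulVec_zero] at hx
  obtain rfl : x = 0 := eq_zero_of_mulVec_eq_zero A.charpoly_monic.ne_zero hx
  rw [hinr, mulVec_zero, mulVec_zero, add_zero] at hxo
  rw [← Sum.elim_comp_inl_inr v, hxo, hinr, Sum.elim_zero_zero]

theorem injective_observabilityMatrix_mulVec {N M : ℕ}
    (hreach : Function.Surjective (A.reachabilityMatrix B N).mulVec)
    [Module.IsTorsionFree F[X] ((ι ⊕ κ → F[X]) ⧸ convCode A B Cm Dm)]
    (hM : Fintype.card σ ≤ M) : Function.Injective (A.observabilityMatrix Cm M).mulVec := by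
  rw [← coe_mulVecLin, ← LinearMap.ker_eq_bot, ker_mulVecLin_eq_bot_iff]
  intro c hc
  have hc' (j : ℕ) (hj : j < Fintype.card σ) : Cm *ᵥ (A ^ j *ᵥ c) = 0 := funext fun i => by
    rw [mulVec_mulVec]
    exact congrFun hc (⟨j, hj.trans_le hM⟩, i)
  obtain ⟨x₀, hx₀, hCx₀⟩ := A.exists_charmatrix_mulVec_eq_charpoly_smul Cm c hc'
  obtain ⟨x₁, u, hx₁⟩ := exists_charmatrix_mulVec_eq_sub hreach c
  let w : ι ⊕ κ → F[X] := Sum.elim (Cm.map C *ᵥ x₁ + Dm.map C *ᵥ u) u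
  have hqw : A.charpoly • w ∈ convCode A B Cm Dm := by
    refine mem_convCode.mpr ⟨x₀ + A.charpoly • x₁, ?_, ?_⟩
    · change _ = B.map C *ᵥ (A.charpoly • u)
      rw [mulVec_add, mulVec_smul, hx₀, hx₁, mulVec_smul, smul_sub, add_sub_cancel]
    · change A.charpoly • (Cm.map C *ᵥ x₁ + Dm.map C *ᵥ u) = _ + Dm.map C *ᵥ (A.charpoly • u)
      rw [mulVec_add, hCx₀, mulVec_smul, mulVec_smul, zero_add, smul_add]
  obtain ⟨x, hx, -⟩ := mem_convCode.mp <| (Submodule.isTorsionFree_quotient_iff _).mp ‹_›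
    _ A.charpoly_monic.ne_zero w hqw
  have hconst : charmatrix A *ᵥ (x - x₁) = C ∘ c := by
    rw [mulVec_sub, hx, hx₁]
    exact sub_sub_cancel _ _
  exact ((charmatrix_mulVec_eq_C_comp_iff A).mp hconst).2

variable [Fintype ι]

theorem isTorsionFree_quotient_convCode {N : ℕ}
    (hobs : Function.Injective (A.observabilityMatrix Cm N).mulVec) :
    Module.IsTorsionFree F[X] ((ι ⊕ κ → F[X]) ⧸ convCode A B Cm Dm) := by
  rw [Submodule.isTorsionFree_quotient_iff]
  intro r hr w hw
  obtain ⟨x, hx, hxo⟩ := mem_convCode.mp hw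
  have hinr : (r • w) ∘ Sum.inr = r • (w ∘ Sum.inr) := rfl
  have hinl : (r • w) ∘ Sum.inl = r • (w ∘ Sum.inl) := rfl
  rw [hinr, mulVec_smul] at hx
  rw [hinl, hinr, mulVec_smul, ← sub_eq_iff_eq_add, ← smul_sub] at hxo
  choose x' hx' using dvd_of_dvd_charmatrix_mulVec hobs (fun i => ⟨_, congrFun hx i⟩)
    (fun i => ⟨_, (congrFun hxo i).symm⟩)
  obtain rfl : x = r • x' := funext hx'
  rw [mulVec_smul] at hx hxo
  exact mem_convCode.mpr ⟨x', smul_right_injective _ hr hx,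
    sub_eq_iff_eq_add.mp (smul_right_injective _ hr hxo)⟩

theorem finrank_convCode : Module.finrank F[X] (convCode A B Cm Dm) = Fintype.card κ := by
  apply le_antisymm
  · have hinj : Function.Injective
        (LinearMap.funLeft F[X] F[X] Sum.inr ∘ₗ (convCode A B Cm Dm).subtype) := by
      rw [← LinearMap.ker_eq_bot, LinearMap.ker_eq_bot']
      exact fun v hv => Subtype.ext (eq_zero_of_mem_convCode v.2 hv)
    simpa using LinearMap.finrank_le_finrank_of_injective hinj
  · classical
    let q := A.charpoly
    -- `χ_A` times the transfer matrix `C (X - A)⁻¹ B + D`, stacked over `χ_A • 1`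
    let G₀ : Matrix (ι ⊕ κ) κ F[X] :=
      fromRows (Cm.map C * adjugate (charmatrix A) * B.map C + q • Dm.map C) (q • 1)
    have hG₀ (u : κ → F[X]) : G₀ *ᵥ u ∈ convCode A B Cm Dm := by
      refine mem_convCode.mpr ⟨adjugate (charmatrix A) *ᵥ (B.map C *ᵥ u), ?_, ?_⟩
      · rw [fromRows_mulVec, Sum.elim_comp_inr, smul_mulVec, one_mulVec, mulVec_smul,
          mulVec_mulVec, mul_adjugate, smul_mulVec, one_mulVec]
        rfl
      · rw [fromRows_mulVec, Sum.elim_comp_inl, Sum.elim_comp_inr, add_mulVec, smul_mulVec,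
          smul_mulVec, one_mulVec, mulVec_smul, mulVec_mulVec, mulVec_mulVec, Matrix.mul_assoc]
    have hinj : Function.Injective ((G₀.mulVecLin).codRestrict _ hG₀) := by
      intro u u' h
      have h' : G₀ *ᵥ u = G₀ *ᵥ u' := congrArg Subtype.val h
      exact smul_right_injective _ A.charpoly_monic.ne_zero <| by
        simpa [G₀, fromRows_mulVec, smul_mulVec] using congrArg (· ∘ Sum.inr) h'
    simpa using LinearMap.finrank_le_finrank_of_injective hinj

end ConvolutionalCode

theorem stmt15_general (F : Type*) [Field F] (s n k : ℕ)
    (A : Matrix (Fin s) (Fin s) F) (B : Matrix (Fin s) (Fin k) F)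
    (Cm : Matrix (Fin (n - k)) (Fin s) F) (Dm : Matrix (Fin (n - k)) (Fin k) F)
    (hreach : Matrix.rank (fun (i : Fin s) (p : Fin s × Fin k) => (A ^ (p.1 : ℕ) * B) i p.2) = s) :
    (∃ G : Matrix (Fin (n - k) ⊕ Fin k) (Fin k) F[X],
      LinearIndependent F[X] G.transpose ∧
      -- G generates the code 𝒞(A,B,C,D):
      {v : (Fin (n - k) ⊕ Fin k) → F[X] | ∃ x : Fin s → F[X],
          (X : F[X]) • x = (A.map Polynomial.C).mulVec x +
            (B.map Polynomial.C).mulVec (v ∘ Sum.inr) ∧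
          v ∘ Sum.inl = (Cm.map Polynomial.C).mulVec x +
            (Dm.map Polynomial.C).mulVec (v ∘ Sum.inr)} =
        {v | ∃ m : Fin k → F[X], v = G.mulVec m} ∧
      -- G is right prime:
      ∃ L : Matrix (Fin k) (Fin (n - k) ⊕ Fin k) F[X], L * G = 1) ↔
    Matrix.rank (fun (p : Fin s × Fin (n - k)) (j : Fin s) => (Cm * A ^ (p.1 : ℕ)) p.2 j) = s := by
  have hreach' : Function.Surjective (A.reachabilityMatrix B s).mulVec :=
    mulVec_surjective_of_rank_eq (hreach.trans (Fintype.card_fin s).symm)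
  refine Iff.trans ?_ ((mulVec_injective_iff_rank_eq (A.observabilityMatrix Cm s)).trans
    (by rw [Fintype.card_fin]; exact Iff.rfl))
  have hrange (G : Matrix (Fin (n - k) ⊕ Fin k) (Fin k) F[X]) :
      ((LinearMap.range G.mulVecLin : Submodule F[X] _) : Set _) = {v | ∃ m, v = G *ᵥ m} := by
    ext v
    simp [eq_comm]
  constructor
  · rintro ⟨G, -, hG, L, hLG⟩
    have hcode : convCode A B Cm Dm = LinearMap.range G.mulVecLin :=
      SetLike.coe_injective (hG.trans (hrange G).symm)
    have := isTorsionFree_quotient_range_of_mul_eq_one hLG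
    rw [← hcode] at this
    exact injective_observabilityMatrix_mulVec (Dm := Dm) hreach' (Fintype.card_fin s).le
  · intro hobs
    have := isTorsionFree_quotient_convCode (B := B) (Dm := Dm) hobs
    obtain ⟨G, L, hG, hLG⟩ :=
      (convCode A B Cm Dm).exists_range_mulVecLin_eq_and_mul_eq_one finrank_convCode
    refine ⟨G, linearIndependent_transpose_of_mul_eq_one hLG, ?_, L, hLG⟩
    change (convCode A B Cm Dm : Set (Fin (n - k) ⊕ Fin k → F[X])) = _
    rw [← hG, hrange]

/-- Assume `(A,B)` is reachable. Then `𝒞(A,B,C,D)` is non-catastrophic (admits a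
right prime generator matrix, i.e. one with a polynomial left inverse) iff
`(A,C)` is observable. -/
theorem stmt15 (F : Type*) [Field F] [Fintype F] (s n k : ℕ)
    (A : Matrix (Fin s) (Fin s) F) (B : Matrix (Fin s) (Fin k) F)
    (Cm : Matrix (Fin (n - k)) (Fin s) F) (Dm : Matrix (Fin (n - k)) (Fin k) F)
    (hreach : Matrix.rank (fun (i : Fin s) (p : Fin s × Fin k) => (A ^ (p.1 : ℕ) * B) i p.2) = s) :
    (∃ G : Matrix (Fin (n - k) ⊕ Fin k) (Fin k) F[X],
      LinearIndependent F[X] G.transpose ∧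
      -- G generates the code 𝒞(A,B,C,D):
      {v : (Fin (n - k) ⊕ Fin k) → F[X] | ∃ x : Fin s → F[X],
          (X : F[X]) • x = (A.map Polynomial.C).mulVec x +
            (B.map Polynomial.C).mulVec (v ∘ Sum.inr) ∧
          v ∘ Sum.inl = (Cm.map Polynomial.C).mulVec x +
            (Dm.map Polynomial.C).mulVec (v ∘ Sum.inr)} =
        {v | ∃ m : Fin k → F[X], v = G.mulVec m} ∧
      -- G is right prime:
      ∃ L : Matrix (Fin k) (Fin (n - k) ⊕ Fin k) F[X], L * G = 1) ↔
    Matrix.rank (fun (p : Fin s × Fin (n - k)) (j : Fin s) => (Cm * A ^ (p.1 : ℕ)) p.2 j) = s :=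
  stmt15_general F s n k A B Cm Dm hreach
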